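/- arXiv:1304.5320 — 3 statements merged into one kernel-verified Lean document; each statement's English description precedes it below -/
import Mathlib

section
/- For a prime p and n ≥ 1, the generating n-tuples of ℤ_p^n are exactly the bases of ℤ_p^n as a vector space over ℤ_p, Nielsen moves correspond to elementary row operations which preserve the determinant of the corresponding matrix in GL_n(ℤ_p), and hence the product replacement graph Γ_n(ℤ_p^n) has exactly p−1 connected components, one for each nonzero value of the determinant. -/
open Subgroup Set

/-- `T` is obtained from `S` by a single Nielsen move. -/
def nielsenMove {G : Type*} [Group G] {n : ℕ} (S T : Fin n → G) : Prop :=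
  ∃ i j : Fin n, i ≠ j ∧
    (T = Function.update S j (S j * S i) ∨ T = Function.update S j (S j * (S i)⁻¹) ∨
     T = Function.update S j (S i * S j) ∨ T = Function.update S j ((S i)⁻¹ * S j))

/-- The product replacement graph on generating `n`-tuples of `G`. -/
def genPRG (G : Type*) [Group G] (n : ℕ) :
    SimpleGraph {S : Fin n → G // Subgroup.closure (Set.range S) = ⊤} where
  Adj S T := S ≠ T ∧ (nielsenMove S.1 T.1 ∨ nielsenMove T.1 S.1)
  symm := ⟨fun S T h => ⟨h.1.symm, h.2.symm⟩⟩
  loopless := ⟨fun S h => h.1 rfl⟩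

/-!
Over `𝔽_p` a subgroup of `𝔽_p^n` is the same thing as a subspace, so a tuple generates exactly
when its rows form a basis, i.e. when its row matrix is invertible. In the abelian group `𝔽_p^n`
each Nielsen move adds `±` row `i` to row `j`, which preserves the determinant. Conversely the
move `R_{ji}` is left multiplication by the elementary transvection `1 + E_{ij}`; iterating it
gives every transvection `1 + c E_{ij}`, as `c` is an integer multiple of `1`, and transvections
generate `SL_n(𝔽_p)` (`diag(a, a⁻¹)` is a product of four of them). Hence two generating tuples
lie in one component iff their matrices differ by an element of `SL_n(𝔽_p)`, i.e. iff they have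
the same determinant, and the components correspond to the units of `𝔽_p`.
-/

open Matrix
open scoped MatrixGroups

section RowMatrix

variable {m ι R : Type*}

def rowMatrix : (m → Multiplicative (ι → R)) ≃ Matrix m ι R where
  toFun S := Matrix.of fun i => (S i).toAdd
  invFun M i := .ofAdd (M i)
  left_inv _ := rfl
  right_inv _ := rfl

theorem rowMatrix_apply (S : m → Multiplicative (ι → R)) (i : m) :
    rowMatrix S i = (S i).toAdd := rfl

theorem rowMatrix_update [DecidableEq m] (S : m → Multiplicative (ι → R)) (j : m)
    (g : Multiplicative (ι → R)) :
    rowMatrix (Function.update S j g) = (rowMatrix S).updateRow j g.toAdd := by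
  ext a b
  rcases eq_or_ne a j with rfl | h
  · simp [rowMatrix_apply]
  · simp [rowMatrix_apply, h]

end RowMatrix

theorem AddSubgroup.closure_eq_toAddSubgroup_span {N : ℕ} {M : Type*} [AddCommGroup M]
    [Module (ZMod N) M] (s : Set M) :
    AddSubgroup.closure s = (Submodule.span (ZMod N) s).toAddSubgroup := by
  rw [← Submodule.span_int_eq_addSubgroupClosure,
    ← Submodule.restrictScalars_span ℤ (ZMod N) (ZMod.intCast_surjective) s]
  rfl

theorem Matrix.span_range_row_eq_top_iff {m R : Type*} [Fintype m] [DecidableEq m]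
    [CommRing R] (A : Matrix m m R) :
    Submodule.span R (Set.range A.row) = ⊤ ↔ IsUnit A.det := by
  rw [← range_vecMulLinear, LinearMap.range_eq_top, coe_vecMulLinear,
    vecMul_surjective_iff_isUnit, isUnit_iff_isUnit_det]

theorem closure_range_eq_top_iff_isUnit_det {N : ℕ} {ι : Type*} [Fintype ι] [DecidableEq ι]
    (S : ι → Multiplicative (ι → ZMod N)) :
    Subgroup.closure (Set.range S) = ⊤ ↔ IsUnit (rowMatrix S).det := by
  rw [← span_range_row_eq_top_iff, ← Subgroup.toAddSubgroup'.injective.eq_iff,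
    Subgroup.toAddSubgroup'_closure, AddSubgroup.closure_eq_toAddSubgroup_span (N := N)]
  have hrange : Multiplicative.ofAdd ⁻¹' Set.range S = Set.range (rowMatrix S).row := by
    ext v
    exact ⟨fun ⟨i, hi⟩ => ⟨i, congrArg Multiplicative.toAdd hi⟩,
      fun ⟨i, hi⟩ => ⟨i, congrArg Multiplicative.ofAdd hi⟩⟩
  rw [hrange, map_top, Submodule.toAddSubgroup_eq_top]

theorem Matrix.SpecialLinearGroup.diag2n_eq_transvection_mul {ι F : Type*} [Fintype ι]
    [DecidableEq ι] [Field F] {i j : ι} (hij : i ≠ j) (a : F) (ha : a ≠ 0) :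
    SpecialLinearGroup.diag2n hij a ha =
      SpecialLinearGroup.transvection hij (-a) *
        SpecialLinearGroup.transvection hij.symm (a⁻¹ - 1) *
        SpecialLinearGroup.transvection hij 1 *
        SpecialLinearGroup.transvection hij.symm (a - 1) := by
  ext k l
  simp [SpecialLinearGroup.diag2n_coe, SpecialLinearGroup.transvection_coe, mul_add, add_mul,
    single_mul_single_of_ne _ _ _ _ hij, single_mul_single_of_ne _ _ _ _ hij.symm,
    diagonal_apply, single_apply, one_apply]
  grind

theorem SimpleGraph.card_connectedComponent_eq_of_reachable_iff {V β : Type*}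
    {G : SimpleGraph V} (f : V → β) (hf : Function.Surjective f)
    (h : ∀ u v, G.Reachable u v ↔ f u = f v) : Nat.card G.ConnectedComponent = Nat.card β := by
  let F := ConnectedComponent.lift f fun u v p _ => (h u v).1 p.reachable
  refine Nat.card_congr (Equiv.ofBijective F ⟨?_, ?_⟩)
  · exact ConnectedComponent.ind₂ fun u v huv => ConnectedComponent.sound ((h u v).2 huv)
  · exact fun b => (hf b).imp' G.connectedComponentMk fun _ hu => hu

theorem nielsenMove.det_rowMatrix_eq {R : Type*} [CommRing R] {n : ℕ}
    {S T : Fin n → Multiplicative (Fin n → R)} (h : nielsenMove S T) :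
    (rowMatrix T).det = (rowMatrix S).det := by
  obtain ⟨i, j, hij, hT⟩ := h
  obtain ⟨c, hc⟩ : ∃ c : R,
      rowMatrix T = (rowMatrix S).updateRow j (rowMatrix S j + c • rowMatrix S i) := by
    rcases hT with rfl | rfl | rfl | rfl
    · exact ⟨1, by simp [rowMatrix_update, rowMatrix_apply]⟩
    · exact ⟨-1, by simp [rowMatrix_update, rowMatrix_apply]⟩
    · exact ⟨1, by simp [rowMatrix_update, rowMatrix_apply, add_comm]⟩
    · exact ⟨-1, by simp [rowMatrix_update, rowMatrix_apply, add_comm]⟩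
  rw [hc, det_updateRow_add_smul_self _ hij.symm]

namespace genPRG

section

variable {G : Type*} [Group G] {n : ℕ}

theorem reachable_of_nielsenMove {S T : {S : Fin n → G // Subgroup.closure (Set.range S) = ⊤}}
    (h : nielsenMove S.1 T.1) : (genPRG G n).Reachable S T := by
  by_cases hST : S = T
  · exact hST ▸ SimpleGraph.Reachable.refl S
  · exact SimpleGraph.Adj.reachable ⟨hST, .inl h⟩

theorem det_rowMatrix_eq_of_reachable {R : Type*} [CommRing R]
    {S T : {S : Fin n → Multiplicative (Fin n → R) // Subgroup.closure (Set.range S) = ⊤}}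
    (h : (genPRG _ n).Reachable S T) : (rowMatrix S.1).det = (rowMatrix T.1).det := by
  obtain ⟨w⟩ := h
  induction w with
  | nil => rfl
  | cons hadj _ ih =>
    rcases hadj.2 with hm | hm
    exacts [hm.det_rowMatrix_eq.symm.trans ih, hm.det_rowMatrix_eq.trans ih]

end

section

variable {N n : ℕ}

local notation "Gen" =>
  {S : Fin n → Multiplicative (Fin n → ZMod N) // Subgroup.closure (Set.range S) = ⊤}

instance : SMul SL(n, ZMod N) Gen where
  smul A S := ⟨rowMatrix.symm (A * rowMatrix S.1), by
    rw [closure_range_eq_top_iff_isUnit_det, Equiv.apply_symm_apply, det_mul, A.2, one_mul,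
      ← closure_range_eq_top_iff_isUnit_det]
    exact S.2⟩

theorem rowMatrix_smul (A : SL(n, ZMod N)) (S : Gen) :
    rowMatrix (A • S).1 = A * rowMatrix S.1 :=
  Equiv.apply_symm_apply _ _

instance : MulAction SL(n, ZMod N) Gen where
  one_smul S := Subtype.ext <| rowMatrix.injective <| by
    rw [rowMatrix_smul, Matrix.SpecialLinearGroup.coe_one, Matrix.one_mul]
  mul_smul A B S := Subtype.ext <| rowMatrix.injective <| by
    rw [rowMatrix_smul, rowMatrix_smul, rowMatrix_smul, Matrix.SpecialLinearGroup.coe_mul,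
      Matrix.mul_assoc]

theorem transvection_one_smul {i j : Fin n} (hij : i ≠ j) (S : Gen) :
    (SpecialLinearGroup.transvection hij (1 : ZMod N) • S).1 =
      Function.update S.1 i (S.1 i * S.1 j) := by
  apply rowMatrix.injective
  ext a b
  rw [rowMatrix_smul, rowMatrix_update, SpecialLinearGroup.transvection, updateRow_apply]
  split_ifs with ha
  · subst ha
    simp [transvection_mul_apply_same, rowMatrix_apply]
  · exact transvection_mul_apply_of_ne (ha := ha) ..

theorem reachable_transvection_smul [NeZero N] {i j : Fin n} (hij : i ≠ j) (c : ZMod N)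
    (S : Gen) :
    (genPRG _ n).Reachable S (SpecialLinearGroup.transvection hij c • S) := by
  obtain ⟨k, rfl⟩ := ZMod.natCast_zmod_surjective c
  induction k generalizing S with
  | zero => simp
  | succ k ih =>
    have hstep :
        (genPRG _ n).Reachable S (SpecialLinearGroup.transvection hij (1 : ZMod N) • S) :=
      reachable_of_nielsenMove ⟨j, i, hij.symm, .inl (transvection_one_smul hij S)⟩
    rw [Nat.cast_succ, SpecialLinearGroup.transvection_add, mul_smul]
    exact hstep.trans (ih _)

theorem reachable_smul [Fact N.Prime] (A : SL(n, ZMod N)) (S : Gen) :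
    (genPRG _ n).Reachable S (A • S) := by
  rcases subsingleton_or_nontrivial (Fin n) with _ | _
  · rw [Subsingleton.elim A 1, one_smul]
  induction A using SpecialLinearGroup.diagonal_transvection_induction' generalizing S with
  | hdiag i j hij hc =>
    rw [SpecialLinearGroup.diag2n_eq_transvection_mul]
    simp only [mul_smul]
    exact (reachable_transvection_smul _ _ _).trans <| (reachable_transvection_smul _ _ _).trans <|
      (reachable_transvection_smul _ _ _).trans (reachable_transvection_smul _ _ _)
  | htransvec i j hij c => exact reachable_transvection_smul hij c S
  | hmul A B hA hB =>
    rw [mul_smul]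
    exact (hB S).trans (hA _)

theorem reachable_of_det_eq [Fact N.Prime] {S T : Gen}
    (h : (rowMatrix S.1).det = (rowMatrix T.1).det) : (genPRG _ n).Reachable S T := by
  have hS : IsUnit (rowMatrix S.1).det := (closure_range_eq_top_iff_isUnit_det _).1 S.2
  let A : SL(n, ZMod N) := ⟨rowMatrix T.1 * (rowMatrix S.1)⁻¹, by
    rw [det_mul, det_nonsing_inv, ← h, Ring.mul_inverse_cancel _ hS]⟩
  have hAS : A • S = T := Subtype.ext <| rowMatrix.injective <| by
    rw [rowMatrix_smul]
    exact nonsing_inv_mul_cancel_right _ _ hS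
  exact hAS ▸ reachable_smul A S

theorem exists_det_rowMatrix_eq [NeZero n] (u : (ZMod N)ˣ) :
    ∃ S : Gen, (rowMatrix S.1).det = u := by
  obtain ⟨A, hA⟩ := GeneralLinearGroup.det_surjective (n := Fin n) u
  refine ⟨⟨rowMatrix.symm A, ?_⟩, ?_⟩
  · rw [closure_range_eq_top_iff_isUnit_det, Equiv.apply_symm_apply]
    exact A.isUnit.map detMonoidHom
  · rw [Equiv.apply_symm_apply, ← hA]
    rfl

end

end genPRG

/-- Generating `n`-tuples of `ℤ_p^n` are exactly the bases (tuples whose matrix is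
invertible, i.e. has nonzero determinant), and `Γ_n(ℤ_p^n)` has exactly `p - 1`
connected components, one for each value of the determinant. -/
theorem stmt6 (p : ℕ) [Fact p.Prime] (n : ℕ) (hn : 1 ≤ n) :
    (∀ S : Fin n → Multiplicative (Fin n → ZMod p),
      Subgroup.closure (Set.range S) = ⊤ ↔
        IsUnit (Matrix.det (Matrix.of fun i j => Multiplicative.toAdd (S i) j))) ∧
    (∀ S T : {S : Fin n → Multiplicative (Fin n → ZMod p) //
        Subgroup.closure (Set.range S) = ⊤},
      (genPRG (Multiplicative (Fin n → ZMod p)) n).Reachable S T ↔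
        Matrix.det (Matrix.of fun i j => Multiplicative.toAdd (S.1 i) j) =
        Matrix.det (Matrix.of fun i j => Multiplicative.toAdd (T.1 i) j)) ∧
    Nat.card ((genPRG (Multiplicative (Fin n → ZMod p)) n).ConnectedComponent) = p - 1 := by
  have hgen := fun S : Fin n → Multiplicative (Fin n → ZMod p) ↦
    closure_range_eq_top_iff_isUnit_det S
  have hreach : ∀ S T : {S : Fin n → Multiplicative (Fin n → ZMod p) //
      Subgroup.closure (Set.range S) = ⊤},
      (genPRG _ n).Reachable S T ↔ (rowMatrix S.1).det = (rowMatrix T.1).det :=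
    fun S T ↦ ⟨genPRG.det_rowMatrix_eq_of_reachable, genPRG.reachable_of_det_eq⟩
  refine ⟨hgen, hreach, ?_⟩
  have : NeZero n := ⟨by omega⟩
  let detUnit := fun S : {S : Fin n → Multiplicative (Fin n → ZMod p) //
      Subgroup.closure (Set.range S) = ⊤} ↦ ((hgen S.1).1 S.2).unit
  have hdetUnit : Function.Surjective detUnit := fun u ↦
    (genPRG.exists_det_rowMatrix_eq u).imp fun S hS ↦ Units.ext (by simpa [detUnit] using hS)
  rw [SimpleGraph.card_connectedComponent_eq_of_reachable_iff detUnit hdetUnit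
    fun S T ↦ by simp [hreach, detUnit, Units.ext_iff], Nat.card_eq_fintype_card, ZMod.card_units]
end

section
/- Let H < G be finitely generated groups. Suppose some connected component of Γ_m(H) has exponential growth, and let S = (g_1,...,g_n) be a generating n-tuple of G. Then the connected component of Γ_{n+m}(G) containing (g_1,...,g_n,1,...,1) has exponential growth. -/
open Filter Subgroup Set

/-- The product replacement graph of `G` on `n`-tuples: edges are Nielsen moves.
(Nielsen moves preserve generation, so the connected component of a generating
`n`-tuple consists exactly of generating `n`-tuples.) -/
def PRG (G : Type*) [Group G] (n : ℕ) : SimpleGraph (Fin n → G) where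
  Adj S T := S ≠ T ∧ (nielsenMove S T ∨ nielsenMove T S)
  symm := ⟨fun S T h => ⟨h.1.symm, h.2.symm⟩⟩
  loopless := ⟨fun S h => h.1 rfl⟩

/-- The ball of radius `r` around vertex `v` in a graph. -/
def gball {V : Type*} (Γ : SimpleGraph V) (v : V) (r : ℕ) : Set V :=
  {w | ∃ p : Γ.Walk v w, p.length ≤ r}

/-- `Γ` has exponential growth from `v`. -/
def expGrowthFrom {V : Type*} (Γ : SimpleGraph V) (v : V) : Prop :=
  ∃ α : ℝ, 1 < α ∧ ∀ᶠ r : ℕ in atTop, α ^ r ≤ ((gball Γ v r).ncard : ℝ)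

/-- The ball of radius `r` in the Cayley graph of `G` with respect to the tuple `S`. -/
def cayleyBall {G : Type*} [Group G] {n : ℕ} (S : Fin n → G) (r : ℕ) : Set G :=
  {g | ∃ l : List G, l.length ≤ r ∧ (∀ x ∈ l, x ∈ Set.range S ∨ x⁻¹ ∈ Set.range S) ∧
    l.prod = g}


/-! The map `(h₁, …, hₘ) ↦ (g₁, …, gₙ, h₁, …, hₘ)` is an injective graph homomorphism
`Γ_m(H) → Γ_{n+m}(G)`, since a Nielsen move among the last `m` entries stays one. Because the
`gᵢ` generate `G`, right multiplication of a tail entry by any `gᵢ^{±1}` is a Nielsen move, so all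
tuples `(g₁, …, gₙ, c)` lie in one component; in particular the image of `T` is at some distance
`L` from `(g₁, …, gₙ, 1, …, 1)`. Hence the `(L + r)`-ball around the base point contains an
injective image of the `r`-ball around `T`, and the growth rate `α` of the latter still gives
growth rate `√α` after the shift by `L`. -/

namespace SimpleGraph

variable {V W : Type*} {Γ : SimpleGraph V} {Γ' : SimpleGraph W}

lemma gball_finite (hfin : ∀ v, (Γ.neighborSet v).Finite) (v : V) (r : ℕ) :
    (gball Γ v r).Finite := by
  induction r with
  | zero =>
    refine (Set.finite_singleton v).subset ?_
    rintro w ⟨p, hp⟩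
    exact (Walk.eq_of_length_eq_zero (Nat.le_zero.mp hp)).symm
  | succ r ih =>
    refine (ih.union (ih.biUnion fun u _ => hfin u)).subset ?_
    rintro w ⟨p, hp⟩
    rcases p.length.lt_or_ge (r + 1) with hl | hl
    · exact Or.inl ⟨p, Nat.lt_succ_iff.mp hl⟩
    · have hp_nil : ¬ p.Nil := by rw [Walk.not_nil_iff_lt_length]; omega
      refine Or.inr (Set.mem_biUnion ⟨p.dropLast, ?_⟩ (p.adj_penultimate hp_nil))
      rw [Walk.length_dropLast]; omega

lemma gball_subset_gball_of_walk {v w : V} (p : Γ.Walk v w) (r : ℕ) :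
    gball Γ w r ⊆ gball Γ v (p.length + r) := by
  rintro u ⟨q, hq⟩
  exact ⟨p.append q, by rw [Walk.length_append]; omega⟩

lemma image_gball_subset (f : Γ →g Γ') (v : V) (r : ℕ) :
    f '' gball Γ v r ⊆ gball Γ' (f v) r := by
  rintro _ ⟨w, ⟨p, hp⟩, rfl⟩
  exact ⟨p.map f, by rwa [Walk.length_map]⟩

end SimpleGraph

lemma exists_pow_le_pow_sub {α : ℝ} (hα : 1 < α) (L : ℕ) :
    ∃ β : ℝ, 1 < β ∧ ∀ᶠ r : ℕ in atTop, β ^ r ≤ α ^ (r - L) := by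
  refine ⟨√α, Real.lt_sqrt_of_sq_lt (by linarith), ?_⟩
  filter_upwards [eventually_ge_atTop (2 * L)] with r hr
  calc √α ^ r ≤ √α ^ (2 * (r - L)) :=
        pow_le_pow_right₀ (Real.le_sqrt_of_sq_le (by linarith)) (by omega)
    _ = α ^ (r - L) := by rw [pow_mul, Real.sq_sqrt (by linarith)]

namespace expGrowthFrom

variable {V W : Type*} {Γ : SimpleGraph V} {Γ' : SimpleGraph W} {v : V} {w : W}

lemma of_ncard_gball_le (h : expGrowthFrom Γ v) (L : ℕ)
    (hle : ∀ r, (gball Γ v r).ncard ≤ (gball Γ' w (L + r)).ncard) : expGrowthFrom Γ' w := by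
  obtain ⟨α, hα, hev⟩ := h
  obtain ⟨β, hβ, hβα⟩ := exists_pow_le_pow_sub hα L
  refine ⟨β, hβ, ?_⟩
  filter_upwards [hβα, (tendsto_sub_atTop_nat L).eventually hev, eventually_ge_atTop L]
    with r hβr hαr hLr
  calc β ^ r ≤ α ^ (r - L) := hβr
    _ ≤ (gball Γ v (r - L)).ncard := hαr
    _ ≤ (gball Γ' w (L + (r - L))).ncard := by exact_mod_cast hle (r - L)
    _ = (gball Γ' w r).ncard := by rw [Nat.add_sub_cancel' hLr]

lemma of_injective_hom (h : expGrowthFrom Γ v) (f : Γ →g Γ') (hf : Function.Injective f)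
    (hfin : ∀ u, (Γ'.neighborSet u).Finite) (hreach : Γ'.Reachable w (f v)) :
    expGrowthFrom Γ' w := by
  obtain ⟨p⟩ := hreach
  refine h.of_ncard_gball_le p.length fun r => ?_
  calc (gball Γ v r).ncard = (f '' gball Γ v r).ncard := (ncard_image_of_injective _ hf).symm
    _ ≤ (gball Γ' (f v) r).ncard :=
        ncard_le_ncard (SimpleGraph.image_gball_subset f v r) (SimpleGraph.gball_finite hfin _ r)
    _ ≤ (gball Γ' w (p.length + r)).ncard :=
        ncard_le_ncard (SimpleGraph.gball_subset_gball_of_walk p r)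
          (SimpleGraph.gball_finite hfin _ _)

end expGrowthFrom

lemma Fin.append_update_right {α : Type*} {n m : ℕ} (a : Fin n → α) (b : Fin m → α)
    (j : Fin m) (x : α) :
    Fin.append a (Function.update b j x) = Function.update (Fin.append a b) (Fin.natAdd n j) x := by
  ext k
  refine Fin.addCases (fun i => ?_) (fun i => ?_) k
  · have hi : Fin.castAdd m i ≠ Fin.natAdd n j := by simp [Fin.ext_iff]; omega
    simp [Function.update_of_ne hi]
  · simp [Function.update_apply]

lemma Fin.append_right_injective {α : Type*} {n m : ℕ} (a : Fin n → α) :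
    Function.Injective (Fin.append a : (Fin m → α) → Fin (n + m) → α) := fun b c h =>
  funext fun i => by simpa using congrFun h (Fin.natAdd n i)

namespace nielsenMove

variable {G K : Type*} [Group G] [Group K] {k : ℕ} {S T : Fin k → G}

lemma symm (h : nielsenMove S T) : nielsenMove T S := by
  obtain ⟨i, j, hij, hT⟩ := h
  refine ⟨i, j, hij, ?_⟩
  rcases hT with rfl | rfl | rfl | rfl <;> simp [Function.update_of_ne hij]

lemma map (φ : G →* K) (h : nielsenMove S T) : nielsenMove (φ ∘ S) (φ ∘ T) := by
  obtain ⟨i, j, hij, hT⟩ := h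
  refine ⟨i, j, hij, ?_⟩
  rcases hT with rfl | rfl | rfl | rfl <;> simp [Function.comp_update]

lemma append_left {n : ℕ} (R : Fin n → G) (h : nielsenMove S T) :
    nielsenMove (Fin.append R S) (Fin.append R T) := by
  obtain ⟨i, j, hij, hT⟩ := h
  refine ⟨Fin.natAdd n i, Fin.natAdd n j, by simpa [Fin.ext_iff] using hij, ?_⟩
  rcases hT with rfl | rfl | rfl | rfl <;> simp [Fin.append_update_right]

end nielsenMove

namespace PRG

variable {G K : Type*} [Group G] [Group K] {k : ℕ}

lemma neighborSet_finite (S : Fin k → G) : ((PRG G k).neighborSet S).Finite := by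
  refine (Set.finite_iUnion fun i : Fin k => Set.finite_iUnion fun j : Fin k =>
    Set.toFinite ({Function.update S j (S j * S i), Function.update S j (S j * (S i)⁻¹),
      Function.update S j (S i * S j), Function.update S j ((S i)⁻¹ * S j)} :
        Set (Fin k → G))).subset ?_
  intro T hT
  obtain ⟨i, j, -, hT⟩ : nielsenMove S T := hT.2.elim id nielsenMove.symm
  simp only [mem_iUnion, mem_insert_iff, mem_singleton_iff]
  exact ⟨i, j, hT⟩

lemma reachable_of_nielsenMove {S T : Fin k → G} (h : nielsenMove S T) :
    (PRG G k).Reachable S T := by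
  by_cases hST : S = T
  · exact hST ▸ .refl S
  · exact SimpleGraph.Adj.reachable ⟨hST, Or.inl h⟩

def homOfInjective (φ : G →* K) (hφ : Function.Injective φ) : PRG G k →g PRG K k where
  toFun S := φ ∘ S
  map_rel' := by
    rintro S T ⟨hST, h⟩
    exact ⟨fun h' => hST (hφ.comp_left h'), h.imp (·.map φ) (·.map φ)⟩

lemma homOfInjective_injective (φ : G →* K) (hφ : Function.Injective φ) :
    Function.Injective (homOfInjective (k := k) φ hφ) :=
  hφ.comp_left

variable {n m : ℕ}

def appendLeft (R : Fin n → G) : PRG G m →g PRG G (n + m) where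
  toFun := Fin.append R
  map_rel' := by
    rintro S T ⟨hST, h⟩
    exact ⟨fun h' => hST (Fin.append_right_injective R h'),
      h.imp (·.append_left R) (·.append_left R)⟩

lemma appendLeft_injective (R : Fin n → G) : Function.Injective (appendLeft (m := m) R) :=
  Fin.append_right_injective R

variable {S : Fin n → G}

lemma reachable_append_update_mul (hS : closure (range S) = ⊤) (c : Fin m → G) (j : Fin m)
    (g : G) : (PRG G (n + m)).Reachable (Fin.append S c)
      (Fin.append S (Function.update c j (c j * g))) := by
  have hg : g ∈ closure (range S) := hS ▸ mem_top g
  induction hg using Subgroup.closure_induction generalizing c with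
  | mem _ hx =>
    obtain ⟨i, rfl⟩ := hx
    refine reachable_of_nielsenMove ⟨Fin.castAdd m i, Fin.natAdd n j, ?_, Or.inl ?_⟩
    · simp [Fin.ext_iff]; omega
    · simp [Fin.append_update_right]
  | one => simp
  | mul x y _ _ hx hy =>
    simpa [mul_assoc] using (hx c).trans (hy (Function.update c j (c j * x)))
  | inv x _ hx => simpa using (hx (Function.update c j (c j * x⁻¹))).symm

lemma reachable_append (hS : closure (range S) = ⊤) (c d : Fin m → G) :
    (PRG G (n + m)).Reachable (Fin.append S c) (Fin.append S d) := by
  classical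
  suffices ∀ s : Finset (Fin m), (PRG G (n + m)).Reachable (Fin.append S c)
      (Fin.append S (s.piecewise d c)) by simpa using this Finset.univ
  intro s
  induction s using Finset.induction_on with
  | empty => simp
  | insert j s _ ih =>
    rw [Finset.piecewise_insert]
    simpa using ih.trans (reachable_append_update_mul hS _ j ((s.piecewise d c j)⁻¹ * d j))

end PRG

theorem stmt7_general {G : Type*} [Group G] (H : Subgroup G)
    {m n : ℕ} (T : Fin m → H)
    (hTgrow : expGrowthFrom (PRG H m) T)
    (S : Fin n → G) (hS : closure (Set.range S) = ⊤) :
    expGrowthFrom (PRG G (n + m)) (Fin.append S fun _ => 1) :=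
  hTgrow.of_injective_hom
    ((PRG.appendLeft S).comp (PRG.homOfInjective H.subtype H.subtype_injective))
    ((PRG.appendLeft_injective S).comp (PRG.homOfInjective_injective _ _))
    PRG.neighborSet_finite (PRG.reachable_append hS _ _)

theorem stmt7 {G : Type*} [Group G] (H : Subgroup G) (hG : Group.FG G) (hH : Group.FG H)
    {m n : ℕ} (T : Fin m → H) (hT : closure (Set.range T) = ⊤)
    (hTgrow : expGrowthFrom (PRG H m) T)
    (S : Fin n → G) (hS : closure (Set.range S) = ⊤) :
    expGrowthFrom (PRG G (n + m)) (Fin.append S fun _ => 1) :=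
  stmt7_general H T hTgrow S hS
end

section
/- Let f: G → H be a surjective homomorphism of finitely generated groups and let S be a generating n-tuple of G. If the connected component of f(S) in Γ_n(H) has exponential growth, then the connected component of S in Γ_n(G) has exponential growth. -/
open Filter Subgroup Set

/-!
Applying `f` coordinatewise, every Nielsen move at `f ∘ S` is the image of the same move
(same indices, same formula) at `S`. So walks from `f ∘ S` in `Γ_n(H)` lift to walks of the
same length from `S` in `Γ_n(G)`, and each ball around `f ∘ S` is the image of the ball of
the same radius around `S`. These balls are finite, as a tuple has at most `4n²` Nielsen
neighbours, so the ball sizes around `S` dominate those around `f ∘ S`.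
-/

section GrowthLift

variable {V W : Type*} {Γ : SimpleGraph V} {Δ : SimpleGraph W}

lemma gball_finite (hΓ : ∀ v, (Γ.neighborSet v).Finite) (r : ℕ) (v : V) :
    (gball Γ v r).Finite := by
  induction r generalizing v with
  | zero =>
    refine (Set.finite_singleton v).subset ?_
    rintro w ⟨p, hp⟩
    exact (p.eq_of_length_eq_zero (Nat.le_zero.mp hp)).symm
  | succ r ih =>
    refine ((hΓ v).biUnion fun u _ => ih u).insert v |>.subset ?_
    rintro w ⟨p, hp⟩
    cases p with
    | nil => exact Set.mem_insert _ _
    | cons hadj q =>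
      exact Or.inr (Set.mem_biUnion hadj ⟨q, by simpa using hp⟩)

variable {φ : V → W} (hφ : ∀ v w', Δ.Adj (φ v) w' → ∃ w, Γ.Adj v w ∧ φ w = w')
include hφ

lemma exists_walk_lift {u : W} {w' : W} (p : Δ.Walk u w') (v : V) (hv : φ v = u) :
    ∃ w, φ w = w' ∧ ∃ q : Γ.Walk v w, q.length = p.length := by
  induction p generalizing v with
  | nil => exact ⟨v, hv, .nil, rfl⟩
  | cons hadj p ih =>
    subst hv
    obtain ⟨v₁, hadj₁, rfl⟩ := hφ _ _ hadj
    obtain ⟨w, hw, q, hq⟩ := ih v₁ rfl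
    exact ⟨w, hw, .cons hadj₁ q, by simp [hq]⟩

lemma gball_subset_image_gball (v : V) (r : ℕ) :
    gball Δ (φ v) r ⊆ φ '' gball Γ v r := by
  rintro w' ⟨p, hp⟩
  obtain ⟨w, rfl, q, hq⟩ := exists_walk_lift hφ p v rfl
  exact ⟨w, ⟨q, hq ▸ hp⟩, rfl⟩

lemma ncard_gball_le (hΓ : ∀ v, (Γ.neighborSet v).Finite) (v : V) (r : ℕ) :
    (gball Δ (φ v) r).ncard ≤ (gball Γ v r).ncard :=
  have hfin := gball_finite hΓ r v
  (Set.ncard_le_ncard (gball_subset_image_gball hφ v r) (hfin.image φ)).trans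
    (Set.ncard_image_le hfin)

lemma expGrowthFrom.of_lift (hΓ : ∀ v, (Γ.neighborSet v).Finite) {v : V}
    (h : expGrowthFrom Δ (φ v)) : expGrowthFrom Γ v := by
  obtain ⟨α, hα, hev⟩ := h
  refine ⟨α, hα, hev.mono fun r hr => hr.trans ?_⟩
  exact_mod_cast ncard_gball_le hφ hΓ v r

end GrowthLift

section Nielsen

variable {G H : Type*} [Group G] [Group H] {n : ℕ}

lemma nielsenMove.symm_s8 {S T : Fin n → G} (h : nielsenMove S T) : nielsenMove T S := by
  obtain ⟨i, j, hij, h⟩ := h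
  refine ⟨i, j, hij, ?_⟩
  rcases h with rfl | rfl | rfl | rfl <;> simp [Function.update_of_ne hij]

lemma nielsenMove.exists_lift (f : G →* H) {S : Fin n → G} {T' : Fin n → H}
    (h : nielsenMove (f ∘ S) T') : ∃ T, nielsenMove S T ∧ f ∘ T = T' := by
  obtain ⟨i, j, hij, h⟩ := h
  rcases h with rfl | rfl | rfl | rfl
  · exact ⟨_, ⟨i, j, hij, Or.inl rfl⟩, by simp [Function.comp_update]⟩
  · exact ⟨_, ⟨i, j, hij, Or.inr (Or.inl rfl)⟩, by simp [Function.comp_update]⟩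
  · exact ⟨_, ⟨i, j, hij, Or.inr (Or.inr (Or.inl rfl))⟩, by simp [Function.comp_update]⟩
  · exact ⟨_, ⟨i, j, hij, Or.inr (Or.inr (Or.inr rfl))⟩, by simp [Function.comp_update]⟩

lemma PRG.neighborSet_finite_s8 (S : Fin n → G) : ((PRG G n).neighborSet S).Finite := by
  refine (Set.finite_iUnion fun i : Fin n => Set.finite_iUnion fun j : Fin n =>
    Set.toFinite {Function.update S j (S j * S i), Function.update S j (S j * (S i)⁻¹),
      Function.update S j (S i * S j), Function.update S j ((S i)⁻¹ * S j)}).subset ?_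
  rintro T ⟨-, hST⟩
  obtain ⟨i, j, -, h⟩ := hST.elim id nielsenMove.symm_s8
  simp only [Set.mem_iUnion]
  exact ⟨i, j, by simpa using h⟩

lemma PRG.exists_adj_lift (f : G →* H) (S : Fin n → G) (T' : Fin n → H)
    (h : (PRG H n).Adj (f ∘ S) T') : ∃ T, (PRG G n).Adj S T ∧ f ∘ T = T' := by
  obtain ⟨hne, hST'⟩ := h
  obtain ⟨T, hST, rfl⟩ := (hST'.elim id nielsenMove.symm_s8).exists_lift f
  exact ⟨T, ⟨fun e => hne (e ▸ rfl), Or.inl hST⟩, rfl⟩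

end Nielsen

theorem stmt8_general {G H : Type*} [Group G] [Group H]
    (f : G →* H)
    {n : ℕ} (S : Fin n → G)
    (h : expGrowthFrom (PRG H n) (f ∘ S)) :
    expGrowthFrom (PRG G n) S :=
  expGrowthFrom.of_lift (PRG.exists_adj_lift f) PRG.neighborSet_finite_s8 h

theorem stmt8 {G H : Type*} [Group G] [Group H] (hGfg : Group.FG G) (hHfg : Group.FG H)
    (f : G →* H) (hf : Function.Surjective f)
    {n : ℕ} (S : Fin n → G) (hS : closure (Set.range S) = ⊤)
    (h : expGrowthFrom (PRG H n) (f ∘ S)) :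
    expGrowthFrom (PRG G n) S :=
  stmt8_general f S h
end
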